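/- Let Γ be a finite cc0-language over D such that for every D' with 0 ∈ D' ⊆ dom(Γ), if Γ|D' is a core then Γ|D' is weakly separable. Let I be an instance of CSP(Γ) with variable set V, let π : dom(Γ) \ {0} → ℕ, and let k = Σ_{d} π(d). For a variable v and a value d, let δ_{v,d} denote the assignment giving value d to v and 0 to every other variable. If for every nonzero d ∈ dom(Γ) there are at least k·|dom(Γ)| variables v such that δ_{v,d} is a satisfying assignment of I, then I has a satisfying assignment that assigns each nonzero value d ∈ dom(Γ) to exactly π(d) variables. -/
import Mathlib


/-!
Common definitions for formalizing "Constraint satisfaction parameterized by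
solution size" (Bulatov, Marx).  The finite domain `D` has a distinguished
element `0`.  A constraint language is a set of (arity, relation) pairs.
-/

namespace CSPPaper

variable {D : Type*} {V : Type*}

/-- A constraint language over `D`: a set of pairs (arity, relation). -/
abbrev Lang (D : Type*) : Type _ := Set (Σ n : ℕ, Set (Fin n → D))

/-- The set of values appearing in tuples of the relations of `Γ`
(together with the distinguished value `0`). -/
def dom [Zero D] (Γ : Lang D) : Set D :=
  insert 0 { d | ∃ R ∈ Γ, ∃ t ∈ R.2, ∃ i, t i = d }

/-- A relation is 0-valid if the all-zero tuple belongs to it. -/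
def ZeroValid [Zero D] {n : ℕ} (R : Set (Fin n → D)) : Prop :=
  (fun _ => (0 : D)) ∈ R

/-- Two tuples are disjoint if at every coordinate at least one of them is `0`. -/
def DisjTup [Zero D] {ι : Type*} (t₁ t₂ : ι → D) : Prop :=
  ∀ i, t₁ i = 0 ∨ t₂ i = 0

open Classical in
/-- The union of two (disjoint) tuples. -/
noncomputable def unionTup [Zero D] {ι : Type*} (t₁ t₂ : ι → D) : ι → D :=
  fun i => if t₁ i = 0 then t₂ i else t₁ i

/-- A tuple is contained in a set `C` if all of its nonzero coordinates lie in `C`. -/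
def TupIn [Zero D] {ι : Type*} (t : ι → D) (C : Set D) : Prop :=
  ∀ i, t i ≠ 0 → t i ∈ C

open Classical in
/-- Extend an `m`-tuple to an `n`-tuple along the coordinates in the range of `e`,
using the constants `c` on the remaining coordinates. -/
noncomputable def extendTup {n m : ℕ} (e : Fin m → Fin n) (c : Fin n → D)
    (t : Fin m → D) : Fin n → D :=
  fun j => if h : ∃ i, e i = j then t h.choose else c j

/-- Substitution of constants: the relation obtained from `R` by keeping the coordinates
in the range of the order-embedding `e` (in order) and substituting the constants `c`
into all the remaining coordinates. -/
noncomputable def substRel {n m : ℕ} (R : Set (Fin n → D)) (e : Fin m ↪o Fin n)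
    (c : Fin n → D) : Set (Fin m → D) :=
  { t | extendTup (fun i => e i) c t ∈ R }

/-- `Γ` is a cc0-language: every relation of `Γ` is 0-valid and every 0-valid relation
obtained from a relation of `Γ` by substituting constants belongs to `Γ`. -/
def IsCC0 [Zero D] (Γ : Lang D) : Prop :=
  (∀ R ∈ Γ, ZeroValid R.2) ∧
  ∀ R ∈ Γ, ∀ (m : ℕ) (e : Fin m ↪o Fin R.1) (c : Fin R.1 → D),
    ZeroValid (substRel R.2 e c) →
      (⟨m, substRel R.2 e c⟩ : Σ n : ℕ, Set (Fin n → D)) ∈ Γ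

/-- A (0-valid) relation is weakly separable: closed under union of disjoint tuples
and under difference. -/
def WeaklySepRel [Zero D] {n : ℕ} (R : Set (Fin n → D)) : Prop :=
  (∀ t₁ ∈ R, ∀ t₂ ∈ R, DisjTup t₁ t₂ → unionTup t₁ t₂ ∈ R) ∧
  (∀ t₁ t₂ : Fin n → D, DisjTup t₁ t₂ → t₂ ∈ R → unionTup t₁ t₂ ∈ R → t₁ ∈ R)

/-- A constraint language is weakly separable if all of its relations are. -/
def WeaklySep [Zero D] (Γ : Lang D) : Prop :=
  ∀ R ∈ Γ, WeaklySepRel R.2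

/-- A union counterexample `(R, t₁, t₂)` to weak separability. -/
def UnionCE [Zero D] (Γ : Lang D) (R : Σ n : ℕ, Set (Fin n → D))
    (t₁ t₂ : Fin R.1 → D) : Prop :=
  R ∈ Γ ∧ DisjTup t₁ t₂ ∧ t₁ ∈ R.2 ∧ t₂ ∈ R.2 ∧ unionTup t₁ t₂ ∉ R.2

/-- A difference counterexample `(R, t₁, t₂)` to weak separability. -/
def DiffCE [Zero D] (Γ : Lang D) (R : Σ n : ℕ, Set (Fin n → D))
    (t₁ t₂ : Fin R.1 → D) : Prop :=
  R ∈ Γ ∧ DisjTup t₁ t₂ ∧ t₂ ∈ R.2 ∧ unionTup t₁ t₂ ∈ R.2 ∧ t₁ ∉ R.2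

/-- An endomorphism of a constraint language (as a total map on `D`). -/
def IsEndo [Zero D] (Γ : Lang D) (h : D → D) : Prop :=
  h 0 = 0 ∧ ∀ R ∈ Γ, ∀ t ∈ R.2, (fun i => h (t i)) ∈ R.2

/-- A multivalued morphism of a constraint language (as a total map `D → Set D`). -/
def IsMVM [Zero D] (Γ : Lang D) (φ : D → Set D) : Prop :=
  φ 0 = {0} ∧ ∀ R ∈ Γ, ∀ t ∈ R.2, ∀ s : Fin R.1 → D, (∀ i, s i ∈ φ (t i)) → s ∈ R.2

/-- `x` produces `y` in `Γ`: there is a multivalued morphism `φ` with `φ x = {0, y}`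
and `φ z = {0}` for every `z ≠ x`. -/
def Produces [Zero D] (Γ : Lang D) (x y : D) : Prop :=
  ∃ φ : D → Set D, IsMVM Γ φ ∧ φ x = {0, y} ∧ ∀ z, z ≠ x → φ z = {0}

/-- `y` is regular (type 1): no multivalued morphism has `0, y ∈ φ x` for some
`x ∈ dom Γ`. -/
def IsRegular [Zero D] (Γ : Lang D) (y : D) : Prop :=
  ¬ ∃ (φ : D → Set D) (x : D), IsMVM Γ φ ∧ x ∈ dom Γ ∧ 0 ∈ φ x ∧ y ∈ φ x

/-- `y` is semiregular (type 2): some multivalued morphism has `0, y ∈ φ x` for some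
`x ∈ dom Γ`, but no `x ∈ dom Γ` produces `y`. -/
def IsSemiregular [Zero D] (Γ : Lang D) (y : D) : Prop :=
  (∃ (φ : D → Set D) (x : D), IsMVM Γ φ ∧ x ∈ dom Γ ∧ 0 ∈ φ x ∧ y ∈ φ x) ∧
    ¬ ∃ x ∈ dom Γ, Produces Γ x y

/-- `y` is self-producing (type 3): `y` produces `y`, and every `x` that produces `y`
is produced by `y`. -/
def IsSelfProducing [Zero D] (Γ : Lang D) (y : D) : Prop :=
  Produces Γ y y ∧ ∀ x ∈ dom Γ, Produces Γ x y → Produces Γ y x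

/-- `y` is degenerate (type 4): none of the above. -/
def IsDegenerate [Zero D] (Γ : Lang D) (y : D) : Prop :=
  ¬ IsRegular Γ y ∧ ¬ IsSemiregular Γ y ∧ ¬ IsSelfProducing Γ y

open Classical in
/-- The type (1–4) of a value: regular, semiregular, self-producing, degenerate. -/
noncomputable def typeOf [Zero D] (Γ : Lang D) (y : D) : ℕ :=
  if IsRegular Γ y then 1
  else if IsSemiregular Γ y then 2
  else if IsSelfProducing Γ y then 3
  else 4

open Classical in
/-- The retraction onto `X`: identity on `X` and `0` elsewhere. -/
noncomputable def prRet [Zero D] (X : Set D) : D → D :=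
  fun x => if x ∈ X then x else 0

/-- A component of `Γ`: a nonempty subset of `dom Γ \ {0}` whose retraction is an
endomorphism of `Γ`. -/
def IsComponent [Zero D] (Γ : Lang D) (C : Set D) : Prop :=
  C.Nonempty ∧ C ⊆ dom Γ \ {0} ∧ IsEndo Γ (prRet C)

/-- `C` is the component of `Γ` generated by `X`: the inclusion-minimal component
containing `X`. -/
def GenComponent [Zero D] (Γ : Lang D) (X C : Set D) : Prop :=
  IsComponent Γ C ∧ X ⊆ C ∧ ∀ C', IsComponent Γ C' → X ⊆ C' → C ⊆ C'

/-- Restriction of a relation to a subset of the domain. -/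
def restrictRel {n : ℕ} (D' : Set D) (R : Set (Fin n → D)) : Set (Fin n → D) :=
  { t ∈ R | ∀ i, t i ∈ D' }

/-- Restriction `Γ|D'` of a language to a subset of the domain. -/
def restrictLang (Γ : Lang D) (D' : Set D) : Lang D :=
  (fun R : Σ n : ℕ, Set (Fin n → D) =>
    (⟨R.1, restrictRel D' R.2⟩ : Σ n : ℕ, Set (Fin n → D))) '' Γ

/-- Inner homomorphism of `Γ` from `D₁` to `D₂` (as a total map on `D`). -/
def InnerHom [Zero D] (Γ : Lang D) (D₁ D₂ : Set D) (h : D → D) : Prop :=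
  h 0 = 0 ∧ (∀ a ∈ D₁, h a ∈ D₂) ∧
  ∀ R ∈ Γ, ∀ t ∈ R.2, (∀ i, t i ∈ D₁) → (fun i => h (t i)) ∈ R.2

/-- `D₁` is a closed set in `Γ`: `0 ∈ D₁ ⊆ dom Γ` and no inner homomorphism of `Γ`
from `D₁` to `dom Γ` maps an element of `D₁` outside `D₁`. -/
def ClosedSet [Zero D] (Γ : Lang D) (D₁ : Set D) : Prop :=
  0 ∈ D₁ ∧ D₁ ⊆ dom Γ ∧
  ∀ h : D → D, InnerHom Γ D₁ (dom Γ) h → ∀ a ∈ D₁, h a ∈ D₁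

/-- The set of nonzero nondegenerate values of `Γ`. -/
def NDvals [Zero D] (Γ : Lang D) : Set D :=
  { y | y ∈ dom Γ ∧ y ≠ 0 ∧ ¬ IsDegenerate Γ y }

/-- An instance of a CSP over domain `D` with variable set `V`: a set of constraints,
each consisting of an arity `n`, a scope (an `n`-tuple of variables, repetitions
allowed) and an `n`-ary relation. -/
structure CSPInstance (D : Type*) (V : Type*) where
  cons : Set (Σ n : ℕ, (Fin n → V) × Set (Fin n → D))

/-- All constraint relations of the instance belong to `Γ` (instance of `CSP(Γ)`). -/
def CSPInstance.InLang (I : CSPInstance D V) (Γ : Lang D) : Prop :=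
  ∀ c ∈ I.cons, (⟨c.1, c.2.2⟩ : Σ n : ℕ, Set (Fin n → D)) ∈ Γ

/-- `τ` is a satisfying assignment of the instance. -/
def CSPInstance.Sat (I : CSPInstance D V) (τ : V → D) : Prop :=
  ∀ c ∈ I.cons, (fun i => τ (c.2.1 i)) ∈ c.2.2

/-- `f'` extends `f`: they agree on all variables where `f` is nonzero. -/
def ExtendsA [Zero D] (f' f : V → D) : Prop :=
  ∀ v, f v ≠ 0 → f' v = f v

/-- The size of an assignment: the number of variables with nonzero value. -/
noncomputable def sizeA [Zero D] (f : V → D) : ℕ :=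
  Set.ncard { v | f v ≠ 0 }

/-- `f'` is a minimal satisfying extension of `f` in the instance `I`. -/
def MinSatExt [Zero D] (I : CSPInstance D V) (f f' : V → D) : Prop :=
  I.Sat f' ∧ ExtendsA f' f ∧
  ∀ f'' : V → D, I.Sat f'' → ExtendsA f'' f → ExtendsA f' f'' → f'' = f'

/-- A minimal satisfying assignment of `I`: satisfying, not identically zero, and not
a proper extension of any other not-identically-zero satisfying assignment. -/
def MinSatAssign [Zero D] (I : CSPInstance D V) (f : V → D) : Prop :=
  I.Sat f ∧ f ≠ (fun _ => 0) ∧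
  ∀ g : V → D, I.Sat g → g ≠ (fun _ => 0) → ExtendsA f g → g = f

open Classical in
/-- The assignment giving value `d` to variable `v` and `0` to every other variable. -/
noncomputable def delta [Zero D] (v : V) (d : D) : V → D :=
  fun w => if w = v then d else 0

/-- The integers `Z_{i,d}^{t,Δ}` of the paper. -/
def Zc (t Δ i d : ℕ) : ℕ :=
  (4*t*Δ)^(2*t*Δ + (i*Δ + d)) + (4*t*Δ)^(5*t*Δ - (i*Δ + d))

/-- The set `Z^{t,Δ}` of all the integers `Z_{i,d}^{t,Δ}` for `1 ≤ i ≤ t`, `1 ≤ d ≤ Δ`. -/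
def Zset (t Δ : ℕ) : Set ℕ :=
  { z | ∃ i d : ℕ, 1 ≤ i ∧ i ≤ t ∧ 1 ≤ d ∧ d ≤ Δ ∧ z = Zc t Δ i d }

section Statement19Proof

variable {D : Type*} {V : Type*}

lemma zero_mem_dom [Zero D] (Γ : Lang D) : (0 : D) ∈ dom Γ := Set.mem_insert _ _

lemma mem_dom [Zero D] {Γ : Lang D} {R : Σ n : ℕ, Set (Fin n → D)} (hR : R ∈ Γ)
    {t : Fin R.1 → D} (ht : t ∈ R.2) (i : Fin R.1) : t i ∈ dom Γ :=
  Set.mem_insert_of_mem _ ⟨R, hR, t, ht, i, rfl⟩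

lemma restrictRel_subset {n : ℕ} (D' : Set D) (R : Set (Fin n → D)) :
    restrictRel D' R ⊆ R := fun _ ht => ht.1

lemma restrictRel_restrictRel {n : ℕ} {D₁ D₂ : Set D} (h : D₂ ⊆ D₁)
    (R : Set (Fin n → D)) : restrictRel D₂ (restrictRel D₁ R) = restrictRel D₂ R := by
  ext t
  constructor
  · rintro ⟨⟨h1, _⟩, h2⟩; exact ⟨h1, h2⟩
  · rintro ⟨h1, h2⟩; exact ⟨⟨h1, fun i => h (h2 i)⟩, h2⟩

lemma mem_restrictLang {Γ : Lang D} {R : Σ n : ℕ, Set (Fin n → D)} (hR : R ∈ Γ)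
    (D' : Set D) :
    (⟨R.1, restrictRel D' R.2⟩ : Σ n : ℕ, Set (Fin n → D)) ∈ restrictLang Γ D' :=
  ⟨R, hR, rfl⟩

lemma restrictLang_restrictLang {Γ : Lang D} {D₁ D₂ : Set D} (h : D₂ ⊆ D₁) :
    restrictLang (restrictLang Γ D₁) D₂ = restrictLang Γ D₂ := by
  unfold restrictLang
  rw [Set.image_image]
  apply Set.image_congr
  intro R _
  exact congrArg (Sigma.mk R.1) (restrictRel_restrictRel h R.2)

lemma restrictLang_dom [Zero D] (Γ : Lang D) : restrictLang Γ (dom Γ) = Γ := by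
  unfold restrictLang
  have h : ∀ R ∈ Γ,
      (⟨R.1, restrictRel (dom Γ) R.2⟩ : Σ n : ℕ, Set (Fin n → D)) = id R := by
    intro R hR
    have h2 : restrictRel (dom Γ) R.2 = R.2 := by
      ext t
      exact ⟨fun h => h.1, fun h => ⟨h, fun i => mem_dom hR h i⟩⟩
    rw [show (id R : Σ n : ℕ, Set (Fin n → D)) = R from rfl, ← Sigma.eta R]
    exact congrArg (Sigma.mk R.1) h2
  rw [Set.image_congr h, Set.image_id]

lemma dom_restrictLang_subset [Zero D] {Γ : Lang D} {D' : Set D} (h0 : (0 : D) ∈ D') :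
    dom (restrictLang Γ D') ⊆ D' := by
  intro d hd
  rcases hd with rfl | ⟨R', hR', t, ht, i, rfl⟩
  · exact h0
  · obtain ⟨R, _, rfl⟩ := hR'
    exact ht.2 i

lemma dom_restrictLang_subset_dom [Zero D] {Γ : Lang D} {D' : Set D} :
    dom (restrictLang Γ D') ⊆ dom Γ := by
  intro d hd
  rcases hd with rfl | ⟨R', hR', t, ht, i, rfl⟩
  · exact zero_mem_dom Γ
  · obtain ⟨R, hR, rfl⟩ := hR'
    exact mem_dom hR ht.1 i

lemma extendTup_apply_inj {n m : ℕ} {e : Fin m → Fin n} (he : Function.Injective e)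
    (c : Fin n → D) (t : Fin m → D) (i : Fin m) : extendTup e c t (e i) = t i := by
  unfold extendTup
  have h : ∃ i', e i' = e i := ⟨i, rfl⟩
  rw [dif_pos h]
  exact congrArg t (he h.choose_spec)

lemma extendTup_apply_neg {n m : ℕ} {e : Fin m → Fin n} {j : Fin n}
    (h : ¬ ∃ i, e i = j) (c : Fin n → D) (t : Fin m → D) : extendTup e c t j = c j :=
  dif_neg h

lemma isCC0_restrictLang [Zero D] {Γ : Lang D} (hcc0 : IsCC0 Γ) {D' : Set D}
    (h0 : (0 : D) ∈ D') : IsCC0 (restrictLang Γ D') := by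
  constructor
  · rintro R' ⟨R, hR, rfl⟩
    exact ⟨hcc0.1 R hR, fun _ => h0⟩
  · rintro R' ⟨R, hR, rfl⟩ m e c h0v
    have hz : extendTup (fun i => e i) c (fun _ => (0 : D)) ∈ restrictRel D' R.2 := h0v
    have hc : ∀ j, (¬ ∃ i, (e : Fin m → Fin R.1) i = j) → c j ∈ D' := by
      intro j hj
      have h2 := hz.2 j
      rwa [extendTup_apply_neg hj] at h2
    have hzero : ZeroValid (substRel R.2 e c) := hz.1
    have hmem := hcc0.2 R hR m e c hzero
    have heq : restrictRel D' (substRel R.2 e c) = substRel (restrictRel D' R.2) e c := by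
      ext t
      constructor
      · rintro ⟨ht, htD⟩
        refine ⟨ht, fun j => ?_⟩
        by_cases hj : ∃ i, (e : Fin m → Fin R.1) i = j
        · obtain ⟨i, rfl⟩ := hj
          rw [extendTup_apply_inj e.injective]
          exact htD i
        · rw [extendTup_apply_neg hj]; exact hc j hj
      · rintro ⟨ht, htD⟩
        refine ⟨ht, fun i => ?_⟩
        have h3 := htD ((e : Fin m → Fin R.1) i)
        rwa [extendTup_apply_inj e.injective] at h3
    have := mem_restrictLang hmem D'
    rwa [show (⟨(⟨m, substRel R.2 e c⟩ : Σ n : ℕ, Set (Fin n → D)).1,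
        restrictRel D' (⟨m, substRel R.2 e c⟩ : Σ n : ℕ, Set (Fin n → D)).2⟩ :
        Σ n : ℕ, Set (Fin n → D)) =
        ⟨m, substRel (restrictRel D' R.2) e c⟩ from congrArg (Sigma.mk m) heq] at this

end Statement19Proof
section Statement19Proof2

variable {D : Type*} {V : Type*}

lemma isMVM_comp [Zero D] {Γ : Lang D} {φ ψ : D → Set D} (hφ : IsMVM Γ φ)
    (hψ : IsMVM Γ ψ) : IsMVM Γ (fun z => ⋃ w ∈ ψ z, φ w) := by
  constructor
  · simp only [hψ.1]
    rw [Set.biUnion_singleton, hφ.1]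
  · intro R hR t ht s hs
    have h2 : ∀ i, ∃ w, w ∈ ψ (t i) ∧ s i ∈ φ w := by
      intro i
      have := hs i
      simpa only [Set.mem_iUnion, exists_prop] using this
    choose w hw1 hw2 using h2
    exact hφ.2 R hR w (hψ.2 R hR t ht w hw1) s hw2

lemma produces_trans [Zero D] {Γ : Lang D} {x y z : D} (h1 : Produces Γ x y)
    (h2 : Produces Γ y z) : Produces Γ x z := by
  obtain ⟨φ1, hφ1, hx1, ho1⟩ := h1
  obtain ⟨φ2, hφ2, hx2, ho2⟩ := h2
  refine ⟨fun w => ⋃ u ∈ φ1 w, φ2 u, isMVM_comp hφ2 hφ1, ?_, ?_⟩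
  · show (⋃ u ∈ φ1 x, φ2 u) = {0, z}
    rw [hx1]
    rw [show ({0, y} : Set D) = insert 0 {y} from rfl]
    rw [Set.biUnion_insert, Set.biUnion_singleton, hφ2.1, hx2]
    ext a
    simp only [Set.mem_union, Set.mem_singleton_iff, Set.mem_insert_iff]
    tauto
  · intro w hw
    show (⋃ u ∈ φ1 w, φ2 u) = {0}
    rw [ho1 w hw, Set.biUnion_singleton, hφ2.1]

lemma produces_ne_zero [Zero D] {Γ : Lang D} {x y : D} (h : Produces Γ x y)
    (hy : y ≠ 0) : x ≠ 0 := by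
  obtain ⟨φ, hφ, hx, _⟩ := h
  intro hx0
  subst hx0
  rw [hφ.1] at hx
  have : y ∈ ({0} : Set D) := by rw [hx]; exact Or.inr rfl
  exact hy this

lemma degenerate_has_producer [Zero D] {Γ : Lang D} {z : D} (hz : IsDegenerate Γ z) :
    ∃ x ∈ dom Γ, Produces Γ x z := by
  obtain ⟨hreg, hsemi, _⟩ := hz
  rw [IsRegular, not_not] at hreg
  by_contra hB
  exact hsemi ⟨hreg, hB⟩

lemma exists_nondeg_producer [Zero D] [Fintype D] {Γ : Lang D} {y : D}
    (hy : IsDegenerate Γ y) (hy0 : y ≠ 0) :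
    ∃ x, x ∈ NDvals Γ ∧ Produces Γ x y := by
  classical
  set P : Set D := {x | x ∈ dom Γ ∧ Produces Γ x y} with hP
  have hPne : P.Nonempty := by
    obtain ⟨x, hx1, hx2⟩ := degenerate_has_producer hy
    exact ⟨x, hx1, hx2⟩
  by_contra hcon
  push_neg at hcon
  have hdegP : ∀ x ∈ P, IsDegenerate Γ x := by
    intro x hx
    by_contra hnd
    exact hcon x ⟨hx.1, produces_ne_zero hx.2 hy0, hnd⟩ hx.2
  obtain ⟨xs, hxsF, hmax⟩ := (P.toFinite.toFinset).exists_max_image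
    (fun x => {z | Produces Γ x z}.ncard) ((P.toFinite.toFinset_nonempty).mpr hPne)
  have hxsP : xs ∈ P := (P.toFinite.mem_toFinset).mp hxsF
  have hmax' : ∀ x ∈ P, {z | Produces Γ x z}.ncard ≤ {z | Produces Γ xs z}.ncard := by
    intro x hx
    exact hmax x ((P.toFinite.mem_toFinset).mpr hx)
  obtain ⟨x1, hx1dom, hx1p⟩ := degenerate_has_producer (hdegP xs hxsP)
  have hx1P : x1 ∈ P := ⟨hx1dom, produces_trans hx1p hxsP.2⟩
  have hsub1 : {z | Produces Γ xs z} ⊆ {z | Produces Γ x1 z} :=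
    fun z hz => produces_trans hx1p hz
  have heq1 : {z | Produces Γ xs z} = {z | Produces Γ x1 z} :=
    Set.eq_of_subset_of_ncard_le hsub1 (hmax' x1 hx1P) (Set.toFinite _)
  have hself : Produces Γ xs xs := by
    have : xs ∈ {z | Produces Γ x1 z} := hx1p
    rwa [← heq1] at this
  have hnsp : ¬ IsSelfProducing Γ xs := (hdegP xs hxsP).2.2
  rw [IsSelfProducing] at hnsp
  push_neg at hnsp
  obtain ⟨x2, hx2dom, hx2p, hx2np⟩ := hnsp hself
  have hx2P : x2 ∈ P := ⟨hx2dom, produces_trans hx2p hxsP.2⟩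
  obtain ⟨x3, hx3dom, hx3p⟩ := degenerate_has_producer (hdegP x2 hx2P)
  have hx3P : x3 ∈ P := ⟨hx3dom, produces_trans hx3p hx2P.2⟩
  have hsub3 : insert x2 {z | Produces Γ xs z} ⊆ {z | Produces Γ x3 z} := by
    rintro z (rfl | hz)
    · exact hx3p
    · exact produces_trans hx3p (produces_trans hx2p hz)
  have hlt : {z | Produces Γ xs z}.ncard < {z | Produces Γ x3 z}.ncard := by
    calc {z | Produces Γ xs z}.ncard
        < (insert x2 {z | Produces Γ xs z}).ncard := by
          have hx2np' : x2 ∉ {z | Produces Γ xs z} := hx2np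
          rw [Set.ncard_insert_of_notMem hx2np' (Set.toFinite _)]
          omega
      _ ≤ {z | Produces Γ x3 z}.ncard := Set.ncard_le_ncard hsub3 (Set.toFinite _)
  exact absurd (hmax' x3 hx3P) (not_le.mpr hlt)

lemma prRet_apply_mem [Zero D] {X : Set D} {x : D} (h : x ∈ X) : prRet X x = x :=
  if_pos h

lemma prRet_zero [Zero D] (X : Set D) : prRet X 0 = 0 := by
  unfold prRet
  split <;> rfl

lemma isComponent_dom [Zero D] {Γ : Lang D} (hne : (dom Γ \ {0}).Nonempty) :
    IsComponent Γ (dom Γ \ {0}) := by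
  refine ⟨hne, subset_rfl, prRet_zero _, ?_⟩
  intro R hR t ht
  have h : (fun i => prRet (dom Γ \ {0}) (t i)) = t := by
    funext i
    by_cases h : t i = 0
    · rw [h, prRet_zero]
    · exact prRet_apply_mem ⟨mem_dom hR ht i, h⟩
  rw [h]; exact ht

lemma mem_dom_restrict_of_comp [Zero D] {Γ : Lang D} {C : Set D} (hC : IsComponent Γ C)
    {c : D} (hc : c ∈ C) : c ∈ dom (restrictLang Γ (C ∪ {0})) := by
  obtain ⟨hdom, h0⟩ := hC.2.1 hc
  have hc0 : c ≠ 0 := h0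
  rcases hdom with rfl | ⟨R, hR, t, ht, i, rfl⟩
  · exact absurd rfl hc0
  · refine Set.mem_insert_of_mem _
      ⟨⟨R.1, restrictRel (C ∪ {0}) R.2⟩, mem_restrictLang hR _,
        fun j => prRet C (t j), ⟨hC.2.2.2 R hR t ht, ?_⟩, i, prRet_apply_mem hc⟩
    intro j
    show prRet C (t j) ∈ C ∪ {0}
    by_cases hj : t j ∈ C
    · rw [prRet_apply_mem hj]; exact Or.inl hj
    · rw [show prRet C (t j) = 0 from if_neg hj]; exact Or.inr rfl

end Statement19Proof2
section Statement19Proof3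

variable {D : Type*} {V : Type*}

open Classical in
/-- The assignment placing value `f i` at variable `v i` for the tokens `i ∈ T`. -/
noncomputable def assignOf [Zero D] {ι : Type*} (v : ι → V) (f : ι → D)
    (T : Finset ι) : V → D :=
  fun w => if h : ∃ i ∈ T, v i = w then f h.choose else 0

lemma assignOf_apply_mem [Zero D] {ι : Type*} {v : ι → V} (hv : Function.Injective v)
    (f : ι → D) {T : Finset ι} {i : ι} (hi : i ∈ T) : assignOf v f T (v i) = f i := by
  have h : ∃ j ∈ T, v j = v i := ⟨i, hi, rfl⟩
  rw [assignOf, dif_pos h]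
  exact congrArg f (hv h.choose_spec.2)

lemma assignOf_apply_not [Zero D] {ι : Type*} {v : ι → V} (f : ι → D) {T : Finset ι}
    {w : V} (h : ∀ i ∈ T, v i ≠ w) : assignOf v f T w = 0 := by
  rw [assignOf, dif_neg]
  rintro ⟨i, hi, he⟩
  exact h i hi he

lemma assignOf_congr [Zero D] {ι : Type*} {v : ι → V} {f g : ι → D} {T : Finset ι}
    (h : ∀ i ∈ T, f i = g i) : assignOf v f T = assignOf v g T := by
  funext w
  rw [assignOf, assignOf]
  split
  · next hex => exact h _ hex.choose_spec.1
  · rfl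

lemma assignOf_empty [Zero D] {ι : Type*} (v : ι → V) (f : ι → D) :
    assignOf v f ∅ = fun _ => (0 : D) := by
  funext w
  exact assignOf_apply_not f (fun i hi => absurd hi (Finset.notMem_empty i))

lemma sat_zero [Zero D] {Γ : Lang D} (hcc0 : IsCC0 Γ) {I : CSPInstance D V}
    (hI : I.InLang Γ) : I.Sat (fun _ => 0) :=
  fun c hc => hcc0.1 _ (hI c hc)

lemma sat_assignOf_of_weaklySep [Zero D] {Γ : Lang D} (hcc0 : IsCC0 Γ)
    (hWS : WeaklySep Γ) {I : CSPInstance D V} (hI : I.InLang Γ) {ι : Type*}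
    {v : ι → V} (hv : Function.Injective v) {f : ι → D}
    (hf : ∀ i, I.Sat (delta (v i) (f i))) (T : Finset ι) :
    I.Sat (assignOf v f T) := by
  classical
  induction T using Finset.induction with
  | empty =>
    rw [assignOf_empty]
    exact sat_zero hcc0 hI
  | @insert i₀ T hi₀ ih =>
    intro c hc
    have h1 : (fun j => assignOf v f T (c.2.1 j)) ∈ c.2.2 := ih c hc
    have h2 : (fun j => delta (v i₀) (f i₀) (c.2.1 j)) ∈ c.2.2 := hf i₀ c hc
    have hdisj : DisjTup (fun j => assignOf v f T (c.2.1 j))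
        (fun j => delta (v i₀) (f i₀) (c.2.1 j)) := by
      intro j
      show assignOf v f T (c.2.1 j) = 0 ∨ delta (v i₀) (f i₀) (c.2.1 j) = 0
      by_cases h : c.2.1 j = v i₀
      · left
        rw [h]
        exact assignOf_apply_not f (fun i hi he => hi₀ (hv he ▸ hi))
      · right
        exact if_neg h
    have h3 := (hWS _ (hI c hc)).1 _ h1 _ h2 hdisj
    have heq : (fun j => assignOf v f (insert i₀ T) (c.2.1 j)) =
        unionTup (fun j => assignOf v f T (c.2.1 j))
          (fun j => delta (v i₀) (f i₀) (c.2.1 j)) := by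
      funext j
      show assignOf v f (insert i₀ T) (c.2.1 j) =
        if assignOf v f T (c.2.1 j) = 0 then delta (v i₀) (f i₀) (c.2.1 j)
        else assignOf v f T (c.2.1 j)
      by_cases h : c.2.1 j = v i₀
      · rw [h]
        have hz : assignOf v f T (v i₀) = 0 :=
          assignOf_apply_not f (fun i hi he => hi₀ (hv he ▸ hi))
        rw [assignOf_apply_mem hv f (Finset.mem_insert_self i₀ T), if_pos hz,
          show delta (v i₀) (f i₀) (v i₀) = f i₀ from if_pos rfl]
      · have hd : delta (v i₀) (f i₀) (c.2.1 j) = 0 := if_neg h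
        by_cases hex : ∃ i ∈ T, v i = c.2.1 j
        · obtain ⟨i, hi, he⟩ := hex
          rw [← he, assignOf_apply_mem hv f (Finset.mem_insert_of_mem hi),
            assignOf_apply_mem hv f hi]
          by_cases hz : f i = 0
          · rw [hz, if_pos rfl, hz] at *
            rw [← he] at hd
            exact hd.symm
          · rw [if_neg hz]
        · push_neg at hex
          have hz : assignOf v f T (c.2.1 j) = 0 := assignOf_apply_not f hex
          have hz' : assignOf v f (insert i₀ T) (c.2.1 j) = 0 := by
            apply assignOf_apply_not
            intro i hi
            rcases Finset.mem_insert.mp hi with rfl | hi'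
            · exact fun he => h he.symm
            · exact hex i hi'
          rw [hz', if_pos hz, hd]
    rw [heq]
    exact h3

open Classical in
lemma produce_in_context [Zero D] {Γ : Lang D} (hcc0 : IsCC0 Γ) {n : ℕ}
    {R : Set (Fin n → D)} (hR : (⟨n, R⟩ : Σ n : ℕ, Set (Fin n → D)) ∈ Γ) {x y : D}
    (hxy : Produces Γ x y) (p : Fin n → Prop) (t : Fin n → D)
    (hpt : ∀ j, p j → t j = 0) (ht : t ∈ R)
    (htx : (fun j => if p j then x else t j) ∈ R) :
    (fun j => if p j then y else t j) ∈ R := by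
  classical
  set K : Finset (Fin n) := Finset.univ.filter (fun j => t j = 0) with hK
  set e := K.orderEmbOfFin (k := K.card) rfl with he
  have hrange : ∀ j, (∃ i, e i = j) ↔ t j = 0 := by
    intro j
    constructor
    · rintro ⟨i, rfl⟩
      have h2 : e i ∈ K := Finset.orderEmbOfFin_mem K rfl i
      exact (Finset.mem_filter.mp h2).2
    · intro hj
      have hjK : j ∈ K := Finset.mem_filter.mpr ⟨Finset.mem_univ j, hj⟩
      have h3 : j ∈ Set.range (e : Fin K.card → Fin n) := by
        rw [he, Finset.range_orderEmbOfFin]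
        exact hjK
      exact h3
  have hext : ∀ z : D, extendTup (fun i => e i) t (fun i => if p (e i) then z else 0) =
      fun j => if p j then z else t j := by
    intro z
    funext j
    by_cases hj : ∃ i, (e : Fin K.card → Fin n) i = j
    · obtain ⟨i, rfl⟩ := hj
      rw [extendTup_apply_inj e.injective]
      by_cases hp : p (e i)
      · rw [if_pos hp, if_pos hp]
      · rw [if_neg hp, if_neg hp]
        exact ((hrange (e i)).mp ⟨i, rfl⟩).symm
    · rw [extendTup_apply_neg hj]
      have hp : ¬ p j := by
        intro hp
        exact hj ((hrange j).mpr (hpt j hp))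
      rw [if_neg hp]
  have h0v : ZeroValid (substRel R e t) := by
    show extendTup (fun i => e i) t (fun _ => (0 : D)) ∈ R
    have hz : (fun _ : Fin K.card => (0 : D)) = fun i => if p (e i) then (0:D) else 0 := by
      funext i; rw [ite_self]
    rw [hz, hext 0]
    have ht' : (fun j => if p j then (0:D) else t j) = t := by
      funext j
      by_cases hp : p j
      · rw [if_pos hp, hpt j hp]
      · rw [if_neg hp]
    rw [ht']
    exact ht
  have hmem := hcc0.2 ⟨n, R⟩ hR K.card e t h0v
  have hbx : (fun i => if p (e i) then x else 0) ∈ substRel R e t := by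
    show extendTup (fun i => e i) t (fun i => if p (e i) then x else 0) ∈ R
    rw [hext x]
    exact htx
  obtain ⟨φ, hφ, hφx, hφo⟩ := hxy
  have hby : (fun i => if p (e i) then y else 0) ∈ substRel R e t := by
    apply hφ.2 ⟨K.card, substRel R e t⟩ hmem _ hbx
    intro i
    show (if p (e i) then y else 0) ∈ φ (if p (e i) then x else 0)
    by_cases hp : p (e i)
    · rw [if_pos hp, if_pos hp, hφx]
      exact Or.inr rfl
    · rw [if_neg hp, if_neg hp, hφ.1]
      rfl
  have : extendTup (fun i => e i) t (fun i => if p (e i) then y else 0) ∈ R := hby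
  rwa [hext y] at this

end Statement19Proof3
section Statement19Proof4

variable {D : Type*} {V : Type*}

lemma main_lemma [Zero D] [Fintype D] [Fintype V] :
    ∀ (N : ℕ) (Γ : Lang D), (dom Γ).ncard ≤ N → IsCC0 Γ →
    (∀ D' : Set D, (0 : D) ∈ D' → D' ⊆ dom Γ →
      GenComponent (restrictLang Γ D') (NDvals (restrictLang Γ D'))
        (dom (restrictLang Γ D') \ {0}) →
      WeaklySep (restrictLang Γ D')) →
    ∀ (I : CSPInstance D V), I.InLang Γ →
    ∀ (ι : Type*) [Fintype ι] (dval : ι → D), (∀ i, dval i ∈ dom Γ ∧ dval i ≠ 0) →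
    (∀ d ∈ dom Γ, d ≠ 0 → Fintype.card ι ≤ {v : V | I.Sat (delta v d)}.ncard) →
    ∃ v : ι → V, Function.Injective v ∧ ∀ T : Finset ι, I.Sat (assignOf v dval T) := by
  intro N
  induction N with
  | zero =>
    intro Γ hcard _ _ _ _ ι _ dval _ _
    exfalso
    rw [Nat.le_zero] at hcard
    rw [Set.ncard_eq_zero (Set.toFinite _)] at hcard
    exact absurd (zero_mem_dom Γ) (hcard ▸ Set.notMem_empty _)
  | succ N ih =>
    intro Γ hcard hcc0 hcores I hI ι _ dval hdval hpool
    classical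
    by_cases hι : IsEmpty ι
    · refine ⟨fun i => (hι.false i).elim, fun i => (hι.false i).elim, ?_⟩
      intro T
      have hT : T = ∅ := Finset.eq_empty_of_isEmpty T
      rw [hT, assignOf_empty]
      exact sat_zero hcc0 hI
    have hιne : Nonempty ι := not_isEmpty_iff.mp hι
    by_cases hcore : GenComponent Γ (NDvals Γ) (dom Γ \ {0})
    · -- core case
      have hWS : WeaklySep Γ := by
        have h := hcores (dom Γ) (zero_mem_dom Γ) subset_rfl
        rw [restrictLang_dom] at h
        exact h hcore
      have hall : ∀ s : Finset ι, s.card ≤ (s.biUnion (fun i =>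
          (Set.toFinite {v : V | I.Sat (delta v (dval i))}).toFinset)).card := by
        intro s
        rcases s.eq_empty_or_nonempty with rfl | ⟨i, hi⟩
        · simp
        · calc s.card ≤ Fintype.card ι := Finset.card_le_univ s
            _ ≤ {v : V | I.Sat (delta v (dval i))}.ncard :=
                hpool _ (hdval i).1 (hdval i).2
            _ = ((Set.toFinite {v : V | I.Sat (delta v (dval i))}).toFinset).card :=
                Set.ncard_eq_toFinset_card _ _
            _ ≤ _ := Finset.card_le_card (Finset.subset_biUnion_of_mem (fun i => (Set.toFinite {v : V | I.Sat (delta v (dval i))}).toFinset) hi)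
      obtain ⟨v, hvinj, hv⟩ :=
        (Finset.all_card_le_biUnion_card_iff_exists_injective _).mp hall
      refine ⟨v, hvinj, fun T => ?_⟩
      exact sat_assignOf_of_weaklySep hcc0 hWS hI hvinj
        (fun i => (Set.Finite.mem_toFinset _).mp (hv i)) T
    · -- non-core case
      have hdomne : (dom Γ \ {0}).Nonempty := by
        obtain ⟨i⟩ := hιne
        exact ⟨dval i, (hdval i).1, (hdval i).2⟩
      have hcomp := isComponent_dom hdomne
      have hnd : NDvals Γ ⊆ dom Γ \ {0} := fun y hy => ⟨hy.1, hy.2.1⟩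
      have hex : ∃ C, IsComponent Γ C ∧ NDvals Γ ⊆ C ∧ ¬ (dom Γ \ {0} ⊆ C) := by
        by_contra h
        push_neg at h
        exact hcore ⟨hcomp, hnd, fun C' hC' hsub => h C' hC' hsub⟩
      obtain ⟨C, hCcomp, hCnd, hCnsub⟩ := hex
      obtain ⟨y₀, hy₀dom, hy₀C⟩ := Set.not_subset.mp hCnsub
      set D₁ : Set D := C ∪ {0} with hD₁
      have h0D₁ : (0 : D) ∈ D₁ := Or.inr rfl
      set Γ' := restrictLang Γ D₁ with hΓ'
      have hD₁dom : D₁ ⊆ dom Γ := by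
        rintro d (hd | rfl)
        · exact (hCcomp.2.1 hd).1
        · exact zero_mem_dom Γ
      have hdom' : dom Γ' ⊆ D₁ := dom_restrictLang_subset h0D₁
      have hdomsub : dom Γ' ⊆ dom Γ := dom_restrictLang_subset_dom
      have hy₀' : y₀ ∉ dom Γ' := by
        intro h
        rcases hdom' h with h' | h'
        · exact hy₀C h'
        · exact hy₀dom.2 h'
      have hcard' : (dom Γ').ncard ≤ N := by
        have h1 : (dom Γ').ncard < (dom Γ).ncard :=
          Set.ncard_lt_ncard ⟨hdomsub, fun h => hy₀' (h hy₀dom.1)⟩ (Set.toFinite _)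
        omega
      have hcc0' : IsCC0 Γ' := isCC0_restrictLang hcc0 h0D₁
      have hcores' : ∀ D'' : Set D, (0 : D) ∈ D'' → D'' ⊆ dom Γ' →
          GenComponent (restrictLang Γ' D'') (NDvals (restrictLang Γ' D''))
            (dom (restrictLang Γ' D'') \ {0}) →
          WeaklySep (restrictLang Γ' D'') := by
        intro D'' h0'' hsub''
        rw [hΓ', restrictLang_restrictLang (hsub''.trans hdom')]
        exact hcores D'' h0'' ((hsub''.trans hdom').trans hD₁dom)
      set I' : CSPInstance D V :=
        ⟨(fun c : Σ n : ℕ, (Fin n → V) × Set (Fin n → D) =>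
          (⟨c.1, (c.2.1, restrictRel D₁ c.2.2)⟩ : Σ n : ℕ, (Fin n → V) × Set (Fin n → D)))
            '' I.cons⟩ with hI'def
      have hI'lang : I'.InLang Γ' := by
        rintro c' ⟨c, hc, rfl⟩
        exact mem_restrictLang (hI c hc) D₁
      have hsattrans : ∀ σ : V → D, I'.Sat σ → I.Sat σ := by
        intro σ hσ c hc
        exact (hσ _ ⟨c, hc, rfl⟩).1
      have hxval : ∀ i : ι, ∃ x, x ∈ C ∧ (x = dval i ∨ Produces Γ x (dval i)) := by
        intro i
        by_cases hiC : dval i ∈ C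
        · exact ⟨dval i, hiC, Or.inl rfl⟩
        · have hdeg : IsDegenerate Γ (dval i) := by
            by_contra hndeg
            exact hiC (hCnd ⟨(hdval i).1, (hdval i).2, hndeg⟩)
          obtain ⟨x, hxND, hxprod⟩ := exists_nondeg_producer hdeg (hdval i).2
          exact ⟨x, hCnd hxND, Or.inr hxprod⟩
      choose xval hxvalC hxvalP using hxval
      have hxdom' : ∀ i, xval i ∈ dom Γ' ∧ xval i ≠ 0 := by
        intro i
        refine ⟨mem_dom_restrict_of_comp hCcomp (hxvalC i), ?_⟩
        exact (hCcomp.2.1 (hxvalC i)).2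
      have hpool' : ∀ d ∈ dom Γ', d ≠ 0 →
          Fintype.card ι ≤ {v : V | I'.Sat (delta v d)}.ncard := by
        intro d hd hd0
        have hdC : d ∈ C := by
          rcases hdom' hd with h | h
          · exact h
          · exact absurd h hd0
        have hsub : {v : V | I.Sat (delta v d)} ⊆ {v : V | I'.Sat (delta v d)} := by
          intro w hw
          rintro c' ⟨c, hc, rfl⟩
          refine ⟨hw c hc, ?_⟩
          intro j
          show delta w d (c.2.1 j) ∈ D₁
          by_cases h : c.2.1 j = w
          · rw [show delta w d (c.2.1 j) = d from if_pos h]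
            exact Or.inl hdC
          · rw [show delta w d (c.2.1 j) = 0 from if_neg h]
            exact h0D₁
        calc Fintype.card ι ≤ {v : V | I.Sat (delta v d)}.ncard :=
              hpool d (hdomsub hd) hd0
          _ ≤ _ := Set.ncard_le_ncard hsub (Set.toFinite _)
      obtain ⟨v, hvinj, hvsat'⟩ := ih Γ' hcard' hcc0' hcores' I' hI'lang ι xval hxdom' hpool'
      have hvsat : ∀ T : Finset ι, I.Sat (assignOf v xval T) :=
        fun T => hsattrans _ (hvsat' T)
      -- conversion: replace xval by dval one token at a time
      have hconv : ∀ E : Finset ι, ∀ T : Finset ι,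
          I.Sat (assignOf v (fun i => if i ∈ E then dval i else xval i) T) := by
        intro E
        induction E using Finset.induction with
        | empty =>
          intro T
          have : assignOf v (fun i => if i ∈ (∅ : Finset ι) then dval i else xval i) T
              = assignOf v xval T := by
            apply assignOf_congr
            intro i _
            exact if_neg (Finset.notMem_empty i)
          rw [this]
          exact hvsat T
        | @insert i₀ E hi₀E ihE =>
          intro T
          set g : ι → D := fun i => if i ∈ E then dval i else xval i with hg
          set g' : ι → D := fun i => if i ∈ insert i₀ E then dval i else xval i with hg'
          have hgg' : ∀ i, i ≠ i₀ → g i = g' i := by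
            intro i hi
            show (if i ∈ E then dval i else xval i) =
              (if i ∈ insert i₀ E then dval i else xval i)
            by_cases hiE : i ∈ E
            · rw [if_pos hiE, if_pos (Finset.mem_insert_of_mem hiE)]
            · rw [if_neg hiE, if_neg (fun h => by
                rcases Finset.mem_insert.mp h with h' | h'
                · exact hi h'
                · exact hiE h')]
          by_cases hi₀T : i₀ ∈ T
          · rcases hxvalP i₀ with hxeq | hxprod
            · -- trivial conversion
              have : assignOf v g' T = assignOf v g T := by
                apply assignOf_congr
                intro i hiT
                by_cases hii : i = i₀
                · subst hii
                  show (if i ∈ insert i E then dval i else xval i) =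
                    (if i ∈ E then dval i else xval i)
                  rw [if_pos (Finset.mem_insert_self i E), if_neg hi₀E, hxeq]
                · exact (hgg' i hii).symm
              rw [this]
              exact ihE T
            · -- production step
              intro c hc
              have h1 : (fun j => assignOf v g (T.erase i₀) (c.2.1 j)) ∈ c.2.2 :=
                ihE (T.erase i₀) c hc
              have h2 : (fun j => assignOf v g T (c.2.1 j)) ∈ c.2.2 := ihE T c hc
              have hpt : ∀ j : Fin c.1, c.2.1 j = v i₀ →
                  assignOf v g (T.erase i₀) (c.2.1 j) = 0 := by
                intro j hj
                rw [hj]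
                apply assignOf_apply_not
                intro i hi he
                exact (Finset.mem_erase.mp hi).1 (hvinj he)
              have htx : (fun j => if c.2.1 j = v i₀ then xval i₀
                  else assignOf v g (T.erase i₀) (c.2.1 j)) =
                  (fun j => assignOf v g T (c.2.1 j)) := by
                funext j
                by_cases h : c.2.1 j = v i₀
                · rw [if_pos h, h, assignOf_apply_mem hvinj g hi₀T]
                  show xval i₀ = if i₀ ∈ E then dval i₀ else xval i₀
                  rw [if_neg hi₀E]
                · rw [if_neg h]
                  by_cases hex : ∃ i ∈ T, v i = c.2.1 j
                  · obtain ⟨i, hiT, hie⟩ := hex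
                    have hine : i ≠ i₀ := by
                      intro hh
                      subst hh
                      exact h hie.symm
                    have hiTe : i ∈ T.erase i₀ := Finset.mem_erase.mpr ⟨hine, hiT⟩
                    rw [← hie, assignOf_apply_mem hvinj g hiTe,
                      assignOf_apply_mem hvinj g hiT]
                  · push_neg at hex
                    rw [assignOf_apply_not g hex, assignOf_apply_not g
                      (fun i hi => hex i (Finset.mem_of_mem_erase hi))]
              have key := produce_in_context hcc0 (hI c hc) hxprod
                (fun j => c.2.1 j = v i₀)
                (fun j => assignOf v g (T.erase i₀) (c.2.1 j)) hpt h1 (by rw [htx]; exact h2)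
              have hgoal : (fun j => if c.2.1 j = v i₀ then dval i₀
                  else assignOf v g (T.erase i₀) (c.2.1 j)) =
                  (fun j => assignOf v g' T (c.2.1 j)) := by
                funext j
                by_cases h : c.2.1 j = v i₀
                · rw [if_pos h, h, assignOf_apply_mem hvinj g' hi₀T]
                  show dval i₀ = if i₀ ∈ insert i₀ E then dval i₀ else xval i₀
                  rw [if_pos (Finset.mem_insert_self i₀ E)]
                · rw [if_neg h]
                  by_cases hex : ∃ i ∈ T, v i = c.2.1 j
                  · obtain ⟨i, hiT, hie⟩ := hex
                    have hine : i ≠ i₀ := by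
                      intro hh
                      subst hh
                      exact h hie.symm
                    have hiTe : i ∈ T.erase i₀ := Finset.mem_erase.mpr ⟨hine, hiT⟩
                    rw [← hie, assignOf_apply_mem hvinj g hiTe,
                      assignOf_apply_mem hvinj g' hiT]
                    exact hgg' i hine
                  · push_neg at hex
                    rw [assignOf_apply_not g (fun i hi => hex i (Finset.mem_of_mem_erase hi)),
                      assignOf_apply_not g' hex]
              rw [← hgoal]
              exact key
          · -- i₀ ∉ T : nothing changes
            have : assignOf v g' T = assignOf v g T := by
              apply assignOf_congr
              intro i hiT
              have : i ≠ i₀ := fun h => hi₀T (h ▸ hiT)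
              exact (hgg' i this).symm
            rw [this]
            exact ihE T
      refine ⟨v, hvinj, fun T => ?_⟩
      have h := hconv Finset.univ T
      have heq : assignOf v (fun i => if i ∈ (Finset.univ : Finset ι) then dval i
          else xval i) T = assignOf v dval T := by
        apply assignOf_congr
        intro i _
        exact if_pos (Finset.mem_univ i)
      rwa [heq] at h

end Statement19Proof4
/-- Suppose every restriction `Γ|D'` of the finite cc0-language `Γ` that
is a core is weakly separable.  If `I` is an instance of `CSP(Γ)` such that for every
nonzero `d ∈ dom Γ` there are at least `k·|dom Γ|` variables `v` for which the
assignment `δ_{v,d}` is satisfying (where `k = Σ_d π d`), then `I` has a satisfying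
assignment assigning each nonzero `d ∈ dom Γ` to exactly `π d` variables. -/
theorem statement19 {D : Type*} [Zero D] [Fintype D] {V : Type*} [Fintype V]
    (Γ : Lang D) (hΓfin : Γ.Finite) (hcc0 : IsCC0 Γ)
    (hcores : ∀ D' : Set D, (0 : D) ∈ D' → D' ⊆ dom Γ →
      GenComponent (restrictLang Γ D') (NDvals (restrictLang Γ D'))
        (dom (restrictLang Γ D') \ {0}) →
      WeaklySep (restrictLang Γ D'))
    (I : CSPInstance D V) (hI : I.InLang Γ) (π : D → ℕ) (k : ℕ)
    (hk : k = ∑ d ∈ (Set.toFinite (dom Γ \ {0})).toFinset, π d)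
    (hfreq : ∀ d ∈ dom Γ, d ≠ 0 →
      k * (dom Γ).ncard ≤ Set.ncard { v : V | I.Sat (delta v d) }) :
    ∃ τ : V → D, I.Sat τ ∧ ∀ d ∈ dom Γ, d ≠ 0 → Set.ncard { v : V | τ v = d } = π d := by
  classical
  set s : Finset D := (Set.toFinite (dom Γ \ {0})).toFinset with hs
  set Tok : Finset (D × ℕ) :=
    s.biUnion (fun d => ({d} : Finset D) ×ˢ Finset.range (π d)) with hTok
  have hTokmem : ∀ p : D × ℕ, p ∈ Tok ↔ p.1 ∈ s ∧ p.2 < π p.1 := by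
    intro p
    rw [hTok, Finset.mem_biUnion]
    constructor
    · rintro ⟨d, hd, hp⟩
      rw [Finset.mem_product, Finset.mem_singleton, Finset.mem_range] at hp
      rcases hp with ⟨rfl, h2⟩
      exact ⟨hd, h2⟩
    · rintro ⟨h1, h2⟩
      exact ⟨p.1, h1, Finset.mem_product.mpr
        ⟨Finset.mem_singleton_self _, Finset.mem_range.mpr h2⟩⟩
  have hfib : ∀ d ∈ s, Tok.filter (fun p => p.1 = d) =
      ({d} : Finset D) ×ˢ Finset.range (π d) := by
    intro d hd
    ext p
    rw [Finset.mem_filter, hTokmem, Finset.mem_product, Finset.mem_singleton,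
      Finset.mem_range]
    constructor
    · rintro ⟨⟨_, h2⟩, rfl⟩
      exact ⟨rfl, h2⟩
    · rintro ⟨rfl, h2⟩
      exact ⟨⟨hd, h2⟩, rfl⟩
  have hcardTok : Tok.card = k := by
    rw [Finset.card_eq_sum_card_fiberwise (f := Prod.fst) (t := s)
      (fun p hp => ((hTokmem p).mp hp).1), hk]
    apply Finset.sum_congr rfl
    intro d hd
    rw [hfib d hd]
    simp
  have hdvalmem : ∀ i : {p : D × ℕ // p ∈ Tok}, i.1.1 ∈ dom Γ ∧ i.1.1 ≠ 0 := by
    intro i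
    have h := ((hTokmem i.1).mp i.2).1
    rw [hs, Set.Finite.mem_toFinset] at h
    exact ⟨h.1, h.2⟩
  have hcardι : Fintype.card {p : D × ℕ // p ∈ Tok} = k := by
    rw [Fintype.card_coe, hcardTok]
  have hdompos : 1 ≤ (dom Γ).ncard :=
    (Set.ncard_pos (Set.toFinite _)).mpr ⟨0, zero_mem_dom Γ⟩
  have hpool : ∀ d ∈ dom Γ, d ≠ 0 → Fintype.card {p : D × ℕ // p ∈ Tok} ≤
      {v : V | I.Sat (delta v d)}.ncard := by
    intro d hd hd0
    calc Fintype.card {p : D × ℕ // p ∈ Tok} = k := hcardι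
      _ ≤ k * (dom Γ).ncard := Nat.le_mul_of_pos_right k hdompos
      _ ≤ _ := hfreq d hd hd0
  obtain ⟨v, hvinj, hvsat⟩ := main_lemma (dom Γ).ncard Γ le_rfl hcc0 hcores I hI
    {p : D × ℕ // p ∈ Tok} (fun i => i.1.1) hdvalmem hpool
  refine ⟨assignOf v (fun i : {p : D × ℕ // p ∈ Tok} => i.1.1) Finset.univ,
    hvsat Finset.univ, ?_⟩
  intro d hd hd0
  have himg : {w : V | assignOf v (fun i : {p : D × ℕ // p ∈ Tok} => i.1.1)
      Finset.univ w = d} = v '' {i : {p : D × ℕ // p ∈ Tok} | i.1.1 = d} := by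
    ext w
    constructor
    · intro hw
      have hw' : assignOf v (fun i : {p : D × ℕ // p ∈ Tok} => i.1.1)
          Finset.univ w = d := hw
      by_cases hex : ∃ i ∈ (Finset.univ : Finset {p : D × ℕ // p ∈ Tok}), v i = w
      · rw [assignOf, dif_pos hex] at hw'
        exact ⟨hex.choose, hw', hex.choose_spec.2⟩
      · rw [assignOf, dif_neg hex] at hw'
        exact absurd hw'.symm hd0
    · rintro ⟨i, hi, rfl⟩
      show assignOf v (fun i : {p : D × ℕ // p ∈ Tok} => i.1.1) Finset.univ (v i) = d
      rw [assignOf_apply_mem hvinj _ (Finset.mem_univ i)]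
      exact hi
  rw [himg, Set.ncard_image_of_injective _ hvinj]
  have hset : {i : {p : D × ℕ // p ∈ Tok} | i.1.1 = d} =
      ↑(Finset.univ.filter (fun i : {p : D × ℕ // p ∈ Tok} => i.1.1 = d)) := by
    ext i
    simp
  rw [hset, Set.ncard_coe_finset]
  have hds : d ∈ s := by
    rw [hs, Set.Finite.mem_toFinset]
    exact ⟨hd, hd0⟩
  have hbij : (Finset.univ.filter (fun i : {p : D × ℕ // p ∈ Tok} => i.1.1 = d)).card
      = (Tok.filter (fun p => p.1 = d)).card := by
    apply Finset.card_bij (fun i _ => i.1)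
    · intro a ha
      rw [Finset.mem_filter]
      exact ⟨a.2, (Finset.mem_filter.mp ha).2⟩
    · intro a1 _ a2 _ h
      exact Subtype.ext h
    · intro b hb
      rw [Finset.mem_filter] at hb
      exact ⟨⟨b, hb.1⟩, Finset.mem_filter.mpr ⟨Finset.mem_univ _, hb.2⟩, rfl⟩
  rw [hbij, hfib d hds]
  simp


end CSPPaper
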